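/- Let a be a nonzero color and consider the a/0-Kempe chain K_{a,0}(v₀, v_m) of a proper n-edge coloring of a signed graph. If the chain has a repeated vertex, then its first repeated vertex occurrence is its final vertex: if v_j = v_s with j < s and this is the first self-intersection along the trail, then s = m, i.e., the chain terminates at its first self-intersection. -/

import Mathlib

open SimpleGraph

/-- The signed color set `M_n`: for `n = 2k+1` it is `{0, ±1, …, ±k}`,
and for `n = 2k` it is `{±1, …, ±k}`. -/
def Mset (n : ℕ) : Set ℤ :=
  {a : ℤ | 2 * a.natAbs ≤ n ∧ (a = 0 → Odd n)}

/-- An `n`-edge coloring of the signed graph `(G, σ)`: an assignment of colors from `Mset n`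
to the incidences of `G` such that `γ(v,e) = -σ(e)·γ(w,e)` for each edge `e : vw`. -/
structure SColoring {V : Type*} (G : SimpleGraph V) (σ : Sym2 V → ℤ) (n : ℕ) where
  col : V → Sym2 V → ℤ
  mem_colors : ∀ ⦃v w : V⦄, G.Adj v w → col v s(v, w) ∈ Mset n
  compat : ∀ ⦃v w : V⦄, G.Adj v w → col v s(v, w) = -σ s(v, w) * col w s(v, w)

namespace SColoring

variable {V : Type*} {G : SimpleGraph V} {σ : Sym2 V → ℤ} {n : ℕ}

/-- A coloring is proper if distinct edges incident to a common vertex receive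
distinct colors at that vertex. -/
def Proper (c : SColoring G σ n) : Prop :=
  ∀ ⦃v w x : V⦄, G.Adj v w → G.Adj v x → w ≠ x → c.col v s(v, w) ≠ c.col v s(v, x)

/-- A coloring is zero-free if the color `0` is never used. -/
def ZeroFree (c : SColoring G σ n) : Prop :=
  ∀ ⦃v w : V⦄, G.Adj v w → c.col v s(v, w) ≠ 0

/-- The color `a` is absent at the vertex `v` if no edge incident to `v` is
colored `a` at `v`. -/
def Absent (c : SColoring G σ n) (a : ℤ) (v : V) : Prop :=
  ∀ ⦃w : V⦄, G.Adj v w → c.col v s(v, w) ≠ a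

end SColoring

/-- The defining properties of an `a/b`-Kempe trail of the coloring `c` starting at the
vertex `v₀` (where `a` is absent at `v₀` and the chain starts with a `b`-colored edge):
it is a trail whose edge-color magnitudes alternate `|b|, |a|, |b|, …`, and at each
interior vertex `v i` the two incident chain edges are colored `(-1)^{t_i}·a` and
`(-1)^{t_i}·b`, where `t_i` is the number of positive edges among the first `i` edges
of the trail. -/
def IsKempeTrail {V : Type*} {G : SimpleGraph V} {σ : Sym2 V → ℤ} {n : ℕ}
    (c : SColoring G σ n) (a b : ℤ) {v₀ vm : V} (W : G.Walk v₀ vm) : Prop :=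
  W.IsTrail ∧
  c.Absent a v₀ ∧
  (0 < W.length → c.col v₀ s(v₀, W.getVert 1) = b) ∧
  (∀ i < W.length,
    (c.col (W.getVert i) s(W.getVert i, W.getVert (i + 1))).natAbs =
      if Even i then b.natAbs else a.natAbs) ∧
  (∀ i, 0 < i → i < W.length →
    ({c.col (W.getVert i) s(W.getVert (i - 1), W.getVert i),
      c.col (W.getVert i) s(W.getVert i, W.getVert (i + 1))} : Set ℤ) =
    {(-1) ^ ((W.edges.take i).countP fun e => σ e == 1) * a,
     (-1) ^ ((W.edges.take i).countP fun e => σ e == 1) * b})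

/-- The `a/b`-Kempe chain `K_{a,b}(v₀, vm)`: a *maximal* `a/b`-Kempe trail. -/
def IsKempeChain {V : Type*} {G : SimpleGraph V} {σ : Sym2 V → ℤ} {n : ℕ}
    (c : SColoring G σ n) (a b : ℤ) {v₀ vm : V} (W : G.Walk v₀ vm) : Prop :=
  IsKempeTrail c a b W ∧
    ∀ ⦃x : V⦄ (h : G.Adj vm x), ¬IsKempeTrail c a b (W.concat h)

/-
The colors at an interior vertex of an `a/0`-chain are `±a` and `±0 = 0`, so every vertex of the
chain other than its final one meets a chain edge colored `0` there (at `v₀` this is the first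
edge). If `v j = v k` with `j < k < m`, the vertex therefore meets two zero-colored chain edges,
one of index at most `j` and one of index at least `k - 1 > j`. They are distinct because the
chain is a trail, contradicting properness.
-/

theorem SColoring.Proper.eq_of_col_eq {V : Type*} {G : SimpleGraph V} {σ : Sym2 V → ℤ} {n : ℕ}
    {c : SColoring G σ n} (hc : c.Proper) {v w x : V} (hw : G.Adj v w) (hx : G.Adj v x)
    (h : c.col v s(v, w) = c.col v s(v, x)) : w = x := by
  by_contra hne
  exact hc hw hx hne h

theorem SimpleGraph.Walk.IsTrail.eq_of_edge_eq {V : Type*} {G : SimpleGraph V} {u v : V}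
    {W : G.Walk u v} (hW : W.IsTrail) {i l : ℕ} (hi : i < W.length) (hl : l < W.length)
    (h : s(W.getVert i, W.getVert (i + 1)) = s(W.getVert l, W.getVert (l + 1))) : i = l := by
  rw [← W.getElem_edges (by simpa using hi), ← W.getElem_edges (by simpa using hl)] at h
  exact hW.edges_nodup.getElem_inj_iff.mp h

section KempeTrail

variable {V : Type*} {G : SimpleGraph V} {σ : Sym2 V → ℤ} {n : ℕ} {c : SColoring G σ n}
  {a : ℤ} {v₀ vm : V} {W : G.Walk v₀ vm}

theorem IsKempeTrail.zero_mem_of_interior (hW : IsKempeTrail c a 0 W) {i : ℕ} (hi₀ : 0 < i)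
    (hi : i < W.length) :
    (0 : ℤ) ∈ ({c.col (W.getVert i) s(W.getVert (i - 1), W.getVert i),
      c.col (W.getVert i) s(W.getVert i, W.getVert (i + 1))} : Set ℤ) := by
  obtain ⟨-, -, -, -, hinterior⟩ := hW
  rw [hinterior i hi₀ hi]
  simp

theorem IsKempeTrail.exists_zero_edge (hW : IsKempeTrail c a 0 W) {i : ℕ} (hi : i < W.length) :
    ∃ l < W.length, l ≤ i ∧ i ≤ l + 1 ∧ ∃ w, G.Adj (W.getVert i) w ∧
      s(W.getVert i, w) = s(W.getVert l, W.getVert (l + 1)) ∧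
      c.col (W.getVert i) s(W.getVert i, w) = 0 := by
  rcases Nat.eq_zero_or_pos i with rfl | hi₀
  · refine ⟨0, hi, le_rfl, Nat.zero_le _, W.getVert 1, W.adj_getVert_succ hi, rfl, ?_⟩
    obtain ⟨-, -, hstart, -⟩ := hW
    simpa using hstart hi
  rcases hW.zero_mem_of_interior hi₀ hi with hprev | hnext
  · have hsucc : i - 1 + 1 = i := Nat.sub_add_cancel hi₀
    have hadj := W.adj_getVert_succ (show i - 1 < W.length by omega)
    rw [hsucc] at hadj
    refine ⟨i - 1, by omega, by omega, by omega, W.getVert (i - 1), hadj.symm, ?_, ?_⟩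
    · rw [hsucc, Sym2.eq_swap]
    · rw [Sym2.eq_swap, hprev]
  · exact ⟨i, hi, le_rfl, by omega, W.getVert (i + 1), W.adj_getVert_succ hi, rfl, hnext.symm⟩

end KempeTrail

theorem kempeChain_zero_terminates_at_first_self_intersection_general {V : Type*}
    (G : SimpleGraph V) (σ : Sym2 V → ℤ)
    (n : ℕ) (c : SColoring G σ n) (hc : c.Proper)
    (a : ℤ) {v₀ vm : V}
    (W : G.Walk v₀ vm) (hW : IsKempeChain c a 0 W)
    (j k : ℕ) (hjk : j < k) (hk : k ≤ W.length)
    (hrep : W.getVert j = W.getVert k) :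
    k = W.length := by
  by_contra hne
  have hkW : k < W.length := lt_of_le_of_ne hk hne
  have hsucc_ne : j + 1 ≠ k := by
    rintro rfl
    exact (W.adj_getVert_succ (hjk.trans hkW)).ne hrep
  obtain ⟨l₁, hl₁, hl₁j, -, w₁, hw₁, he₁, hzero₁⟩ := hW.1.exists_zero_edge (hjk.trans hkW)
  obtain ⟨l₂, hl₂, -, hkl₂, w₂, hw₂, he₂, hzero₂⟩ := hW.1.exists_zero_edge hkW
  rw [hrep] at hw₁ he₁ hzero₁
  have hw : w₁ = w₂ := hc.eq_of_col_eq hw₁ hw₂ (hzero₁.trans hzero₂.symm)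
  have hl : l₁ = l₂ := hW.1.1.eq_of_edge_eq hl₁ hl₂ (he₁.symm.trans (hw ▸ he₂))
  omega

/-- An `a/0`-Kempe chain (with `a ≠ 0`) of a proper `n`-edge coloring terminates at its
first self-intersection: if `v j = v k` with `j < k` is the first self-intersection
along the trail, then `k` is the final index of the chain. -/
theorem kempeChain_zero_terminates_at_first_self_intersection {V : Type*} [Fintype V]
    (G : SimpleGraph V) (σ : Sym2 V → ℤ) (hσ : ∀ e ∈ G.edgeSet, σ e = 1 ∨ σ e = -1)
    (n : ℕ) (c : SColoring G σ n) (hc : c.Proper)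
    (a : ℤ) (ha : a ∈ Mset n) (ha0 : a ≠ 0) (h0 : (0 : ℤ) ∈ Mset n) {v₀ vm : V}
    (hzpres : ∃ w : V, G.Adj v₀ w ∧ c.col v₀ s(v₀, w) = 0)
    (W : G.Walk v₀ vm) (hW : IsKempeChain c a 0 W)
    (j k : ℕ) (hjk : j < k) (hk : k ≤ W.length)
    (hrep : W.getVert j = W.getVert k)
    (hfirst : ∀ p q : ℕ, p < q → q < k → W.getVert p ≠ W.getVert q) :
    k = W.length :=
  kempeChain_zero_terminates_at_first_self_intersection_general G σ n c hc a W hW j k hjk hk hrep
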